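/- arXiv:1003.1158 — 4 statements merged into one kernel-verified Lean document; each statement's English description precedes it below -/
import Mathlib

section
/- For every GT-pattern P ∈ GT(λ+ρ) of rank r, one has (L_1 + wgt_1(P), L_2 + wgt_2(P), …, L_r + wgt_r(P)) = Σ_{i=1}^r k_i(P) α_i in ℝ^r, where α_1 = 2e_1 and α_i = e_i − e_{i−1} for 2 ≤ i ≤ r. Equivalently, k_i(P) = Σ_{j=i}^r (wgt_j(P) + L_j) for 2 ≤ i ≤ r, and 2k_1(P) = Σ_{j=1}^r (wgt_j(P) + L_j). -/
/-! Gelfand–Tsetlin patterns for `Sp(2r)` (type `C_r`), following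
Beineke–Brubaker–Frechette. Entries are indexed as in the paper:
row `a i` has entries `a i j` for `i+1 ≤ j ≤ r` (so the top row is `a 0`),
and row `b i` has entries `b i j` for `i ≤ j ≤ r`, `1 ≤ i ≤ r`.
All out-of-range entries are `0`. -/

/-- `Lfun l j = l 1 + l 2 + ⋯ + l j + j`. -/
def Lfun (l : ℕ → ℕ) (j : ℕ) : ℕ := (∑ t ∈ Finset.Icc 1 j, l t) + j

/-- A Gelfand–Tsetlin pattern of rank `r` in `GT(λ+ρ)`, i.e. with top row
`(L r, L (r-1), …, L 1)` where `L j = l 1 + ⋯ + l j + j`. -/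
structure GTPattern (r : ℕ) (l : ℕ → ℕ) where
  a : ℕ → ℕ → ℕ
  b : ℕ → ℕ → ℕ
  a_zero : ∀ i j, ¬(i < r ∧ i + 1 ≤ j ∧ j ≤ r) → a i j = 0
  b_zero : ∀ i j, ¬(1 ≤ i ∧ i ≤ j ∧ j ≤ r) → b i j = 0
  top : ∀ j, 1 ≤ j → j ≤ r → a 0 j = Lfun l (r + 1 - j)
  b_le_a_above : ∀ i j, 1 ≤ i → i ≤ j → j ≤ r → b i j ≤ a (i - 1) j
  a_above_le_b : ∀ i j, 1 ≤ i → i ≤ j → j < r → a (i - 1) (j + 1) ≤ b i j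
  b_le_a_below : ∀ i j, 1 ≤ i → i < r → i + 1 ≤ j → j ≤ r → b i j ≤ a i j
  a_below_le_b : ∀ i j, 1 ≤ i → i < r → i ≤ j → j < r → a i (j + 1) ≤ b i j

namespace GTPattern

variable {r : ℕ} {l : ℕ → ℕ} (P : GTPattern r l)

/-- Row sum `s_a(i) = Σ_{m=i+1}^r a_{i,m}`. -/
def sa (i : ℕ) : ℤ := ∑ m ∈ Finset.Icc (i + 1) r, (P.a i m : ℤ)

/-- Row sum `s_b(i) = Σ_{m=i}^r b_{i,m}`. -/
def sb (i : ℕ) : ℤ := ∑ m ∈ Finset.Icc i r, (P.b i m : ℤ)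

/-- The weight `wgt_i(P) = s_a(r-i) - 2 s_b(r+1-i) + s_a(r+1-i)`. -/
def wgt (i : ℕ) : ℤ := P.sa (r - i) - 2 * P.sb (r + 1 - i) + P.sa (r + 1 - i)

/-- The `k`-coordinates `k_i(P)`. -/
def kcoord (i : ℕ) : ℤ :=
  if i = 1 then P.sa 0 - ∑ m ∈ Finset.Icc 1 r, (P.sb m - P.sa m)
  else P.sa 0 - 2 * ∑ m ∈ Finset.Icc 1 (r + 1 - i), (P.sb m - P.sa m)
        - P.sa (r + 1 - i) + ∑ m ∈ Finset.Icc 1 (r + 1 - i), (P.a 0 m : ℤ)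

/-- `v_{i,j} = Σ_{m=i}^j (a_{i-1,m} - b_{i,m})`. -/
def v (i j : ℕ) : ℤ := ∑ m ∈ Finset.Icc i j, ((P.a (i - 1) m : ℤ) - (P.b i m : ℤ))

/-- `w_{i,j} = Σ_{m=j}^r (a_{i,m} - b_{i,m})`. -/
def w (i j : ℕ) : ℤ := ∑ m ∈ Finset.Icc j r, ((P.a i m : ℤ) - (P.b i m : ℤ))

/-- `u_{i,j} = v_{i,r} + w_{i,j}`. -/
def u (i j : ℕ) : ℤ := P.v i r + P.w i j

/-- `P` is minimal at `b_{i,j}` if `b_{i,j} = a_{i-1,j}`. -/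
def MinimalB (i j : ℕ) : Prop := P.b i j = P.a (i - 1) j

/-- `P` is maximal at `b_{i,j}` if `j < r` and `b_{i,j} = a_{i-1,j+1}`, or `j = r`
and `b_{i,r} = 0`. -/
def MaximalB (i j : ℕ) : Prop :=
  (j < r ∧ P.b i j = P.a (i - 1) (j + 1)) ∨ (j = r ∧ P.b i r = 0)

/-- `P` is minimal at `a_{i,j}` if `a_{i,j} = b_{i,j}`. -/
def MinimalA (i j : ℕ) : Prop := P.a i j = P.b i j

/-- `P` is maximal at `a_{i,j}` if `a_{i,j} = b_{i,j-1}`. -/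
def MaximalA (i j : ℕ) : Prop := P.a i j = P.b i (j - 1)

/-- A pattern is strict if its entries strictly decrease along each row. -/
def Strict : Prop :=
  (∀ i j, i < r → i + 1 ≤ j → j < r → P.a i (j + 1) < P.a i j) ∧
  (∀ i j, 1 ≤ i → i ≤ j → j < r → P.b i (j + 1) < P.b i j)

/-- A pattern is stable if it is strict and every entry below the top row is
minimal or maximal. -/
def Stable : Prop := P.Strict ∧
  (∀ i j, 1 ≤ i → i ≤ j → j ≤ r → P.MinimalB i j ∨ P.MaximalB i j) ∧
  (∀ i j, 1 ≤ i → i < r → i + 1 ≤ j → j ≤ r → P.MinimalA i j ∨ P.MaximalA i j)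

/-- The set of entries of row `a i`. -/
def rowA (i : ℕ) : Finset ℕ := (Finset.Icc (i + 1) r).image (P.a i)

end GTPattern

/-- `alphaC i j` is the `e_j`-coefficient of the simple root `α_i` of `C_r`:
`α_1 = 2 e_1` and `α_i = e_i - e_{i-1}` for `i ≥ 2`. -/
def alphaC (i j : ℕ) : ℤ :=
  if i = 1 then (if j = 1 then 2 else 0)
  else if j = i then 1 else if j = i - 1 then -1 else 0

/-! Reflecting `j ↦ r + 1 - j` turns `wgt_j + L_j` into `s_a(m-1) - 2 s_b(m) + s_a(m) + a_{0,m}`,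
which telescopes. Hence the tail sums `S_i = Σ_{j=i}^r (wgt_j + L_j)` are `k_i` for `i ≥ 2` and
`2 k_1` for `i = 1`, and the `j`-th coordinate of `Σ_i k_i α_i` is `S_j - S_{j+1} = wgt_j + L_j`. -/

open Finset

lemma sum_Icc_one_pred_sub_two_mul_add (s t : ℕ → ℤ) (N : ℕ) :
    ∑ m ∈ Icc 1 N, (s (m - 1) - 2 * t m + s m) = s 0 - s N + 2 * ∑ m ∈ Icc 1 N, (s m - t m) := by
  induction N with
  | zero => simp
  | succ n ih =>
    rw [sum_Icc_succ_top (by omega), sum_Icc_succ_top (by omega), ih, Nat.add_sub_cancel]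
    ring

lemma alphaC_eq {i j : ℕ} (hi : 1 ≤ i) (hj : 1 ≤ j) :
    alphaC i j = (if i = j then (if j = 1 then 2 else 1) else 0) - if i = j + 1 then 1 else 0 := by
  unfold alphaC
  split_ifs <;> omega

lemma sum_mul_alphaC (f : ℕ → ℤ) {r j : ℕ} (hj : 1 ≤ j) (hjr : j ≤ r) :
    ∑ i ∈ Icc 1 r, f i * alphaC i j
      = (if j = 1 then 2 * f 1 else f j) - if j + 1 ≤ r then f (j + 1) else 0 := by
  rw [sum_congr rfl fun i hi => by rw [alphaC_eq (mem_Icc.1 hi).1 hj]]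
  simp only [mul_sub, mul_ite, mul_zero, mul_one, sum_sub_distrib, sum_ite_eq', mem_Icc]
  split_ifs <;> first | omega | subst_vars; ring

namespace GTPattern

variable {r : ℕ} {l : ℕ → ℕ} (P : GTPattern r l)

lemma sa_self : P.sa r = 0 := by
  simp [sa]

lemma wgt_add_Lfun_reflect {m : ℕ} (hm : 1 ≤ m) (hmr : m ≤ r) :
    P.wgt (r + 1 - m) + (Lfun l (r + 1 - m) : ℤ)
      = P.sa (m - 1) - 2 * P.sb m + P.sa m + (P.a 0 m : ℤ) := by
  have hrm : r + 1 - (r + 1 - m) = m := by omega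
  rw [wgt, hrm, show r - (r + 1 - m) = m - 1 by omega, ← P.top m hm hmr]

lemma sum_Icc_wgt_add_Lfun {i : ℕ} (hi : 1 ≤ i) :
    ∑ j ∈ Icc i r, (P.wgt j + (Lfun l j : ℤ))
      = P.sa 0 - P.sa (r + 1 - i) + 2 * ∑ m ∈ Icc 1 (r + 1 - i), (P.sa m - P.sb m)
        + ∑ m ∈ Icc 1 (r + 1 - i), (P.a 0 m : ℤ) := by
  have reflect : ∑ j ∈ Icc i r, (P.wgt j + (Lfun l j : ℤ))
      = ∑ m ∈ Icc 1 (r + 1 - i), (P.sa (m - 1) - 2 * P.sb m + P.sa m + (P.a 0 m : ℤ)) := by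
    refine sum_nbij' (fun j => r + 1 - j) (fun m => r + 1 - m) ?_ ?_ ?_ ?_ ?_ <;>
      intro j hj <;> simp only [mem_Icc] at hj ⊢ <;> try omega
    rw [← P.wgt_add_Lfun_reflect (by omega) (by omega), show r + 1 - (r + 1 - j) = j by omega]
  rw [reflect, sum_add_distrib, sum_Icc_one_pred_sub_two_mul_add]

lemma kcoord_eq_sum_Icc {i : ℕ} (hi : 2 ≤ i) :
    P.kcoord i = ∑ j ∈ Icc i r, (P.wgt j + (Lfun l j : ℤ)) := by
  rw [P.sum_Icc_wgt_add_Lfun (by omega), kcoord, if_neg (by omega)]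
  simp only [sum_sub_distrib]
  ring

lemma two_mul_kcoord_one : 2 * P.kcoord 1 = ∑ j ∈ Icc 1 r, (P.wgt j + (Lfun l j : ℤ)) := by
  rw [P.sum_Icc_wgt_add_Lfun le_rfl, kcoord, if_pos rfl, Nat.add_sub_cancel, sa_self, ← sa]
  simp only [sum_sub_distrib]
  ring

end GTPattern

theorem gt_weight_k_relation_general (r : ℕ) (l : ℕ → ℕ) (P : GTPattern r l) :
    (∀ j, 1 ≤ j → j ≤ r →
      (Lfun l j : ℤ) + P.wgt j = ∑ i ∈ Finset.Icc 1 r, P.kcoord i * alphaC i j) ∧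
    (∀ i, 2 ≤ i → i ≤ r →
      P.kcoord i = ∑ j ∈ Finset.Icc i r, (P.wgt j + (Lfun l j : ℤ))) ∧
    2 * P.kcoord 1 = ∑ j ∈ Finset.Icc 1 r, (P.wgt j + (Lfun l j : ℤ)) := by
  set S : ℕ → ℤ := fun i => ∑ j ∈ Icc i r, (P.wgt j + (Lfun l j : ℤ)) with hS
  refine ⟨fun j hj hjr => ?_, fun i hi _ => P.kcoord_eq_sum_Icc hi, P.two_mul_kcoord_one⟩
  have coord_j : (if j = 1 then 2 * P.kcoord 1 else P.kcoord j) = S j := by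
    split_ifs with hj1
    · exact hj1 ▸ P.two_mul_kcoord_one
    · exact P.kcoord_eq_sum_Icc (by omega)
  have coord_succ : (if j + 1 ≤ r then P.kcoord (j + 1) else 0) = S (j + 1) := by
    split_ifs with hjr'
    · exact P.kcoord_eq_sum_Icc (by omega)
    · simp [hS, Icc_eq_empty hjr']
  have split_S : S j = P.wgt j + Lfun l j + S (j + 1) := by
    simp only [hS]
    rw [← add_sum_Ioc_eq_sum_Icc hjr, Icc_add_one_left_eq_Ioc]
  rw [sum_mul_alphaC _ hj hjr, coord_j, coord_succ, split_S]
  ring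

/-- For every GT-pattern `P ∈ GT(λ+ρ)` of rank `r`,
`(L_1 + wgt_1(P), …, L_r + wgt_r(P)) = Σ_{i=1}^r k_i(P) α_i`, where
`α_1 = 2e_1` and `α_i = e_i − e_{i−1}`.  Equivalently,
`k_i(P) = Σ_{j=i}^r (wgt_j(P) + L_j)` for `2 ≤ i ≤ r`, and
`2 k_1(P) = Σ_{j=1}^r (wgt_j(P) + L_j)`. -/
theorem gt_weight_k_relation (r : ℕ) (hr : 1 ≤ r) (l : ℕ → ℕ) (P : GTPattern r l) :
    (∀ j, 1 ≤ j → j ≤ r →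
      (Lfun l j : ℤ) + P.wgt j = ∑ i ∈ Finset.Icc 1 r, P.kcoord i * alphaC i j) ∧
    (∀ i, 2 ≤ i → i ≤ r →
      P.kcoord i = ∑ j ∈ Finset.Icc i r, (P.wgt j + (Lfun l j : ℤ))) ∧
    2 * P.kcoord 1 = ∑ j ∈ Finset.Icc 1 r, (P.wgt j + (Lfun l j : ℤ)) :=
  gt_weight_k_relation_general r l P
end

section
/- Let P ∈ GT(λ+ρ) be a stable GT-pattern of rank r with associated signed permutation w = (σ, ε) ∈ W(C_r) (the unique w with w(λ+ρ) = −(wgt_1(P), …, wgt_r(P))). Then for each 1 ≤ i ≤ r, the set of entries of row a_{r−i} of P equals {L_{σ^{−1}(1)}, L_{σ^{−1}(2)}, …, L_{σ^{−1}(i)}}. -/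
/-! Stability makes each row a near copy of the row above: `a_{i+1} ⊆ b_{i+1} ⊆ a_i ∪ {0}`, and by
strictness the cardinalities force `b_{i+1} = (a_i ∪ {0}) \ {x}` and `a_{i+1} = b_{i+1} \ {y}`
(when `0 ∉ a_i`), so the row sums give `wgt_{r-i}(P) = x - y`. No weight vanishes, so `0` never
occurs in a row `a_i`: if `0 ∈ a_i` but `0 ∉ a_{i+1}`, then `b_{i+1} = a_i` and `y = 0`, making
`wgt_{r-i}(P) = 0`. Hence exactly one of `x, y` is `0` and `a_i = a_{i+1} ∪ {|wgt_{r-i}(P)|}`.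
Reading the rows upwards from the empty row `a_r` gives `a_{r-k} = {|wgt_1(P)|, …, |wgt_k(P)|}`,
and `|wgt_j(P)| = L_{σ⁻¹(j)}`. -/

lemma Lfun_succ_pos (l : ℕ → ℕ) (k : ℕ) : 0 < Lfun l (k + 1) := by
  rw [Lfun]
  omega

namespace GTPattern

def rowB {r : ℕ} {l : ℕ → ℕ} (P : GTPattern r l) (i : ℕ) : Finset ℕ :=
  (Finset.Icc i r).image (P.b i)

variable {r : ℕ} {l : ℕ → ℕ} {P : GTPattern r l} {i : ℕ}

lemma rowA_self : P.rowA r = ∅ := by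
  simp [rowA]

namespace Strict

lemma a_strictAntiOn (hP : P.Strict) (i : ℕ) : StrictAntiOn (P.a i) (Set.Icc (i + 1) r) :=
  strictAntiOn_of_succ_lt Set.ordConnected_Icc fun j _ hj hj' => by
    simp only [Order.succ_eq_add_one, Set.mem_Icc] at hj hj' ⊢
    exact hP.1 i j (by omega) hj.1 (by omega)

lemma b_strictAntiOn (hP : P.Strict) (hi : 1 ≤ i) : StrictAntiOn (P.b i) (Set.Icc i r) :=
  strictAntiOn_of_succ_lt Set.ordConnected_Icc fun j _ hj hj' => by
    simp only [Order.succ_eq_add_one, Set.mem_Icc] at hj hj' ⊢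
    exact hP.2 i j hi hj.1 (by omega)

lemma card_rowA (hP : P.Strict) (hi : i ≤ r) : (P.rowA i).card = r - i := by
  rw [rowA, Finset.card_image_of_injOn, Nat.card_Icc]
  · omega
  · simpa using (hP.a_strictAntiOn i).injOn

lemma card_rowB (hP : P.Strict) (hi : 1 ≤ i) (hir : i ≤ r) : (P.rowB i).card = r - i + 1 := by
  rw [rowB, Finset.card_image_of_injOn, Nat.card_Icc]
  · omega
  · simpa using (hP.b_strictAntiOn hi).injOn

lemma sa_eq_sum (hP : P.Strict) (i : ℕ) : P.sa i = ∑ v ∈ P.rowA i, (v : ℤ) := by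
  rw [rowA, Finset.sum_image]
  · rfl
  · simpa using (hP.a_strictAntiOn i).injOn

lemma sb_eq_sum (hP : P.Strict) (hi : 1 ≤ i) : P.sb i = ∑ v ∈ P.rowB i, (v : ℤ) := by
  rw [rowB, Finset.sum_image]
  · rfl
  · simpa using (hP.b_strictAntiOn hi).injOn

lemma wgt_eq {y : ℕ} (hP : P.Strict) (hi : i < r) (hy : y ∉ P.rowA (i + 1))
    (hyB : insert y (P.rowA (i + 1)) = P.rowB (i + 1)) :
    P.wgt (r - i) = P.sa i - P.sb (i + 1) - y := by
  have hsb : P.sb (i + 1) = y + P.sa (i + 1) := by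
    rw [hP.sb_eq_sum (by omega), ← hyB, Finset.sum_insert hy, hP.sa_eq_sum]
  rw [wgt, show r - (r - i) = i by omega, show r + 1 - (r - i) = i + 1 by omega]
  linarith

end Strict

namespace Stable

lemma rowB_succ_subset (hP : P.Stable) (hi : i < r) :
    P.rowB (i + 1) ⊆ insert 0 (P.rowA i) := by
  simp only [rowB, rowA, Finset.image_subset_iff, Finset.mem_Icc, Finset.mem_insert,
    Finset.mem_image]
  intro j hj
  rcases hP.2.1 (i + 1) j (by omega) hj.1 hj.2 with hmin | ⟨hjr, hmax⟩ | ⟨rfl, hmax⟩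
  · exact .inr ⟨j, by omega, hmin.symm⟩
  · exact .inr ⟨j + 1, by omega, hmax.symm⟩
  · exact .inl hmax

lemma rowA_subset_rowB (hP : P.Stable) (hi : 1 ≤ i) : P.rowA i ⊆ P.rowB i := by
  simp only [rowB, rowA, Finset.image_subset_iff, Finset.mem_Icc, Finset.mem_image]
  intro j hj
  rcases hP.2.2 i j hi (by omega) hj.1 hj.2 with hmin | hmax
  · exact ⟨j, by omega, hmin.symm⟩
  · exact ⟨j - 1, by omega, hmax.symm⟩

lemma exists_insert_rowA_eq_rowB (hP : P.Stable) (hi : 1 ≤ i) (hir : i ≤ r) :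
    ∃ y ∉ P.rowA i, insert y (P.rowA i) = P.rowB i :=
  Finset.exists_eq_insert_iff.2 ⟨hP.rowA_subset_rowB hi, by
    rw [hP.1.card_rowA hir, hP.1.card_rowB hi hir]⟩

lemma exists_insert_rowB_succ_eq (hP : P.Stable) (hi : i < r) (h0 : 0 ∉ P.rowA i) :
    ∃ x ∉ P.rowB (i + 1), insert x (P.rowB (i + 1)) = insert 0 (P.rowA i) :=
  Finset.exists_eq_insert_iff.2 ⟨hP.rowB_succ_subset hi, by
    rw [Finset.card_insert_of_notMem h0, hP.1.card_rowA hi.le, hP.1.card_rowB (by omega) hi]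
    omega⟩

lemma rowB_succ_eq_of_zero_mem (hP : P.Stable) (hi : i < r) (h0 : 0 ∈ P.rowA i) :
    P.rowB (i + 1) = P.rowA i := by
  refine Finset.eq_of_subset_of_card_le ?_ ?_
  · simpa [Finset.insert_eq_of_mem h0] using hP.rowB_succ_subset hi
  · rw [hP.1.card_rowA hi.le, hP.1.card_rowB (by omega) hi]
    omega

lemma zero_notMem_rowA (hP : P.Stable) (hwgt : ∀ k, 1 ≤ k → k ≤ r → P.wgt k ≠ 0)
    (hi : i ≤ r) : 0 ∉ P.rowA i := by
  induction hi using Nat.decreasingInduction with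
  | self => simp [rowA_self]
  | of_succ i hi ih =>
    intro h0
    have hB := hP.rowB_succ_eq_of_zero_mem hi h0
    obtain ⟨y, hy, hyB⟩ := hP.exists_insert_rowA_eq_rowB (i := i + 1) (by omega) hi
    have hy0 : y = 0 := by
      rw [← hB, ← hyB, Finset.mem_insert] at h0
      exact h0.resolve_right ih |>.symm
    apply hwgt (r - i) (by omega) (by omega)
    rw [hP.1.wgt_eq hi hy hyB, hP.1.sa_eq_sum, hP.1.sb_eq_sum (by omega), hB, hy0]
    simp

lemma insert_natAbs_wgt_rowA_succ (hP : P.Stable) (hwgt : ∀ k, 1 ≤ k → k ≤ r → P.wgt k ≠ 0)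
    (hi : i < r) : insert (P.wgt (r - i)).natAbs (P.rowA (i + 1)) = P.rowA i := by
  have h0 := hP.zero_notMem_rowA hwgt hi.le
  have h0' := hP.zero_notMem_rowA hwgt (i := i + 1) hi
  obtain ⟨x, hx, hxB⟩ := hP.exists_insert_rowB_succ_eq hi h0
  obtain ⟨y, hy, hyB⟩ := hP.exists_insert_rowA_eq_rowB (i := i + 1) (by omega) hi
  have hw : P.wgt (r - i) = x - y := by
    have hsb : P.sb (i + 1) + x = P.sa i := by
      have hsum := congrArg (fun s : Finset ℕ => ∑ v ∈ s, (v : ℤ)) hxB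
      simp only [Finset.sum_insert hx, Finset.sum_insert_zero, Nat.cast_zero] at hsum
      rw [hP.1.sb_eq_sum (by omega), hP.1.sa_eq_sum, ← hsum, add_comm]
    rw [hP.1.wgt_eq hi hy hyB]
    linarith
  have hxy : x ≠ y := by
    have := hwgt (r - i) (by omega) (by omega)
    omega
  rw [← hyB] at hxB
  -- `0 ∈ a_i ∪ {0} = a_{i+1} ∪ {x, y}`, but `0 ∉ a_{i+1}`.
  have hxy0 : x = 0 ∨ y = 0 := by
    have := hxB ▸ Finset.mem_insert_self 0 (P.rowA i)
    simp only [Finset.mem_insert, h0', or_false] at this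
    omega
  suffices insert 0 (insert (P.wgt (r - i)).natAbs (P.rowA (i + 1))) = insert 0 (P.rowA i) by
    rw [← Finset.erase_insert h0, ← this, Finset.erase_insert]
    simp only [Finset.mem_insert, h0', or_false]
    omega
  rcases hxy0 with rfl | rfl
  · simpa [hw] using hxB
  · simpa [hw, Finset.insert_comm] using hxB

lemma rowA_sub_eq_image (hP : P.Stable) (hwgt : ∀ k, 1 ≤ k → k ≤ r → P.wgt k ≠ 0) {k : ℕ}
    (hk : k ≤ r) : P.rowA (r - k) = (Finset.range k).image fun m => (P.wgt (m + 1)).natAbs := by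
  induction k with
  | zero => simp [rowA_self]
  | succ k ih =>
    rw [← hP.insert_natAbs_wgt_rowA_succ hwgt (by omega), Finset.range_add_one,
      Finset.image_insert, show r - (r - (k + 1)) = k + 1 by omega,
      show r - (k + 1) + 1 = r - k by omega, ih (by omega)]

end Stable

lemma natAbs_wgt {σ : Equiv.Perm (Fin r)} {ε : Fin r → ℤˣ}
    (hw : ∀ j : Fin r, (ε j : ℤ) * (Lfun l ((σ⁻¹ j).1 + 1) : ℤ) = - P.wgt (j.1 + 1))
    (j : Fin r) : (P.wgt (j.1 + 1)).natAbs = Lfun l ((σ⁻¹ j).1 + 1) := by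
  rw [← Int.natAbs_neg, ← hw, Int.natAbs_mul, Int.units_natAbs, one_mul, Int.natAbs_natCast]

end GTPattern

theorem gt_stable_rowA_entries_general (r : ℕ) (l : ℕ → ℕ)
    (P : GTPattern r l) (hP : P.Stable)
    (σ : Equiv.Perm (Fin r)) (ε : Fin r → ℤˣ)
    (hw : ∀ j : Fin r,
      (ε j : ℤ) * (Lfun l ((σ⁻¹ j).1 + 1) : ℤ) = - P.wgt (j.1 + 1)) :
    ∀ i : Fin r,
      P.rowA (r - (i.1 + 1))
        = (Finset.univ.filter (fun j : Fin r => j ≤ i)).image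
            (fun j => Lfun l ((σ⁻¹ j).1 + 1)) := by
  have hwgt : ∀ k, 1 ≤ k → k ≤ r → P.wgt k ≠ 0 := fun k hk hkr h => by
    have := GTPattern.natAbs_wgt hw ⟨k - 1, by omega⟩
    simp only [show k - 1 + 1 = k by omega, h, Int.natAbs_zero] at this
    exact (Lfun_succ_pos l _).ne this
  intro i
  rw [hP.rowA_sub_eq_image hwgt i.isLt]
  ext v
  simp only [Finset.mem_image, Finset.mem_range, Finset.mem_filter, Finset.mem_univ, true_and]
  constructor
  · rintro ⟨m, hm, rfl⟩
    exact ⟨⟨m, by omega⟩, Fin.mk_le_of_le_val (by omega), GTPattern.natAbs_wgt hw _ |>.symm⟩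
  · rintro ⟨j, hj, rfl⟩
    exact ⟨j.1, Nat.lt_succ_of_le hj, GTPattern.natAbs_wgt hw j⟩

/-- Let `P ∈ GT(λ+ρ)` be a stable GT-pattern of rank `r` with
associated signed permutation `w = (σ, ε) ∈ W(C_r)`, i.e. the unique `w` with
`w(λ+ρ) = −(wgt_1(P), …, wgt_r(P))`.  Then for each `1 ≤ i ≤ r` the set of
entries of row `a_{r−i}` of `P` equals `{L_{σ⁻¹(1)}, …, L_{σ⁻¹(i)}}`.
(`Fin r` indexes `1, …, r` via `i ↦ i.1 + 1`.) -/
theorem gt_stable_rowA_entries (r : ℕ) (hr : 1 ≤ r) (l : ℕ → ℕ)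
    (P : GTPattern r l) (hP : P.Stable)
    (σ : Equiv.Perm (Fin r)) (ε : Fin r → ℤˣ)
    (hw : ∀ j : Fin r,
      (ε j : ℤ) * (Lfun l ((σ⁻¹ j).1 + 1) : ℤ) = - P.wgt (j.1 + 1)) :
    ∀ i : Fin r,
      P.rowA (r - (i.1 + 1))
        = (Finset.univ.filter (fun j : Fin r => j ≤ i)).image
            (fun j => Lfun l ((σ⁻¹ j).1 + 1)) :=
  gt_stable_rowA_entries_general r l P hP σ ε hw
end

section
/- Let P ∈ GT(λ+ρ) be a stable GT-pattern of rank r with associated signed permutation w = (σ, ε) ∈ W(C_r), and let m_i(P) denote the total number of maximal entries in rows b_{r+1−i} and a_{r+1−i} of P. Then m_i(P) = inv_i(w^{−1}) if ε^{(i)} = +1, and m_i(P) = i + pr_i(w^{−1}) if ε^{(i)} = −1, where inv_i(w^{−1}) = #{ j : j < i and σ^{−1}(j) > σ^{−1}(i) } and pr_i(w^{−1}) = #{ j : j < i and σ^{−1}(j) < σ^{−1}(i) }. -/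
/-!
In a stable pattern the maximal entries of row `b_{n+1}` form a final segment and those of row
`a_{n+1}` an initial segment (by strictness). Hence `b_{n+1}` is `a_n` (padded by `a_{n,r+1} = 0`)
with one entry `A_n` deleted, at the position fixed by the number of maximal entries of `b_{n+1}`,
and `a_{n+1}` is `b_{n+1}` with one entry `B_n` deleted, at the position fixed by the number of
maximal entries of `a_{n+1}`. Consequently `wgt_{r-n} = A_n - B_n` and the top row sums to
`∑ (A_n + B_n)`. Since the `|wgt_k|` are a rearrangement of the top row,
`∑ |A_n - B_n| = ∑ (A_n + B_n)`, so at every step one deleted value is `0` and the other is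
`|wgt_{r-n}|`. Row `a_n` therefore consists of `|wgt_1|, …, |wgt_{r-n}|`; the number of its
entries larger than `|wgt_{r-n}|` is an inversion count of `σ⁻¹`, and it determines the position
of the deletion, hence the number of maximal entries. The sign `ε` decides which of the two rows
loses the entry.
-/

open Finset

theorem Finset.image_erase_of_injOn {α β : Type*} [DecidableEq α] [DecidableEq β]
    {f : α → β} {s : Finset α} {a : α} (hf : Set.InjOn f s) (ha : a ∈ s) :
    (s.erase a).image f = (s.image f).erase (f a) := by
  rw [← sdiff_singleton_eq_erase, image_sdiff_of_injOn hf (singleton_subset_iff.2 ha),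
    image_singleton, sdiff_singleton_eq_erase]

theorem Finset.card_filter_lt_add_card_filter_gt {α β : Type*} [Fintype α] [LinearOrder α]
    [LinearOrder β] {f : α → β} (hf : Function.Injective f) (i : α) :
    #{j | j < i ∧ f j < f i} + #{j | j < i ∧ f i < f j} = #{j | j < i} := by
  rw [← card_filter_add_card_filter_not (s := {j | j < i}) (fun j => f j < f i),
    filter_filter, filter_filter]
  congr 2
  ext j
  simp only [mem_filter, mem_univ, true_and, not_lt]
  exact and_congr_right fun hj => ((hf.ne hj.ne).symm.le_iff_lt).symm

theorem Fin.image_val_add_one_univ (r : ℕ) :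
    (univ : Finset (Fin r)).image (fun j => j.1 + 1) = Icc 1 r := by
  ext k
  simp only [mem_image, mem_univ, true_and, mem_Icc]
  constructor
  · rintro ⟨j, rfl⟩
    omega
  · exact fun h => ⟨⟨k - 1, by omega⟩, by simp only; omega⟩

namespace Nat

/-- The `ℕ`-analogue of `Fin.succAbove`: the increasing enumeration of `ℕ \ {k}`. -/
def succAbove (k q : ℕ) : ℕ := if q < k then q else q + 1

theorem succAbove_of_lt {k q : ℕ} (h : q < k) : succAbove k q = q := if_pos h

theorem succAbove_injective (k : ℕ) : Function.Injective (succAbove k) := by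
  intro a b h
  unfold succAbove at h
  split_ifs at h <;> omega

theorem image_succAbove_Icc {lo hi k : ℕ} (h₁ : lo ≤ k) (h₂ : k ≤ hi + 1) :
    (Icc lo hi).image (succAbove k) = (Icc lo (hi + 1)).erase k := by
  ext x
  simp only [mem_image, mem_erase, mem_Icc, succAbove]
  constructor
  · rintro ⟨q, hq, rfl⟩
    split_ifs <;> omega
  · rintro ⟨hxk, hx⟩
    by_cases h : x < k
    · exact ⟨x, by omega, if_pos h⟩
    · exact ⟨x - 1, by omega, by rw [if_neg (by omega)]; omega⟩

theorem sum_Icc_succAbove_add {M : Type*} [AddCommMonoid M] (f : ℕ → M) {lo hi k : ℕ}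
    (h₁ : lo ≤ k) (h₂ : k ≤ hi + 1) :
    ∑ q ∈ Icc lo hi, f (succAbove k q) + f k = ∑ q ∈ Icc lo (hi + 1), f q := by
  rw [← sum_image (succAbove_injective k).injOn, image_succAbove_Icc h₁ h₂,
    sum_erase_add _ _ (by simp; omega)]

theorem Icc_add_one_left_eq_image (a : ℕ) {b : ℕ} (hb : 1 ≤ b) :
    Icc (a + 1) b = (Icc a (b - 1)).image (· + 1) := by
  rw [image_add_right_Icc, Nat.sub_add_cancel hb]

section IntervalPredicates

variable {p : ℕ → Prop} {lo hi : ℕ}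

theorem of_le_of_forall_succ (hp : ∀ j, lo ≤ j → j < hi → p j → p (j + 1)) {i j : ℕ}
    (hli : lo ≤ i) (hij : i ≤ j) (hj : j ≤ hi) (h : p i) : p j := by
  induction j, hij using Nat.le_induction with
  | base => exact h
  | succ j hij ih => exact hp j (by omega) (by omega) (ih (by omega))

theorem of_le_of_forall_pred (hp : ∀ j, lo < j → j ≤ hi → p j → p (j - 1)) {i j : ℕ}
    (hli : lo ≤ i) (hij : i ≤ j) (hj : j ≤ hi) (h : p j) : p i := by
  induction j, hij using Nat.le_induction with
  | base => exact h
  | succ j hij ih => exact ih (by omega) (by simpa using hp (j + 1) (by omega) hj h)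

theorem iff_lt_add_card_filter_of_succ [DecidablePred p]
    (hp : ∀ j, lo ≤ j → j < hi → p j → p (j + 1)) {j : ℕ} (hj : j ∈ Icc lo hi) :
    p j ↔ hi < j + #{i ∈ Icc lo hi | p i} := by
  rw [mem_Icc] at hj
  constructor
  · intro h
    have hsub : Icc j hi ⊆ {i ∈ Icc lo hi | p i} := fun i hi' => by
      rw [mem_Icc] at hi'
      exact mem_filter.2 ⟨mem_Icc.2 ⟨by omega, hi'.2⟩,
        of_le_of_forall_succ hp hj.1 hi'.1 hi'.2 h⟩
    have := card_le_card hsub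
    rw [Nat.card_Icc] at this
    omega
  · intro h
    by_contra hj'
    have hsub : {i ∈ Icc lo hi | p i} ⊆ Icc (j + 1) hi := fun i hi' => by
      rw [mem_filter, mem_Icc] at hi'
      refine mem_Icc.2 ⟨?_, hi'.1.2⟩
      by_contra! hij
      exact hj' (of_le_of_forall_succ hp hi'.1.1 (by omega) hj.2 hi'.2)
    have := card_le_card hsub
    rw [Nat.card_Icc] at this
    omega

theorem iff_lt_add_card_filter_of_pred [DecidablePred p]
    (hp : ∀ j, lo < j → j ≤ hi → p j → p (j - 1)) {j : ℕ} (hj : j ∈ Icc lo hi) :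
    p j ↔ j < lo + #{i ∈ Icc lo hi | p i} := by
  rw [mem_Icc] at hj
  constructor
  · intro h
    have hsub : Icc lo j ⊆ {i ∈ Icc lo hi | p i} := fun i hi' => by
      rw [mem_Icc] at hi'
      exact mem_filter.2 ⟨mem_Icc.2 ⟨hi'.1, by omega⟩,
        of_le_of_forall_pred hp hi'.1 hi'.2 hj.2 h⟩
    have := card_le_card hsub
    rw [Nat.card_Icc] at this
    omega
  · intro h
    by_contra hj'
    have hsub : {i ∈ Icc lo hi | p i} ⊆ Ico lo j := fun i hi' => by
      rw [mem_filter, mem_Icc] at hi'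
      refine mem_Ico.2 ⟨hi'.1.1, ?_⟩
      by_contra! hij
      exact hj' (of_le_of_forall_pred hp hj.1 (by omega) hi'.1.2 hi'.2)
    have := card_le_card hsub
    rw [Nat.card_Ico] at this
    omega

end IntervalPredicates

end Nat

theorem Lfun_strictMono (l : ℕ → ℕ) : StrictMono (Lfun l) :=
  strictMono_nat_of_lt_succ fun n => by
    unfold Lfun
    rw [sum_Icc_succ_top (by omega)]
    omega

theorem Lfun_pos (l : ℕ → ℕ) {j : ℕ} (hj : 0 < j) : 0 < Lfun l j := by
  unfold Lfun
  omega

namespace GTPattern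

variable {r : ℕ} {l : ℕ → ℕ} (P : GTPattern r l)

theorem rowA_zero_eq : P.rowA 0 = (Icc 1 r).image (Lfun l) := by
  ext x
  simp only [rowA, zero_add, mem_image, mem_Icc]
  constructor
  · rintro ⟨j, hj, rfl⟩
    exact ⟨r + 1 - j, by omega, (P.top j hj.1 hj.2).symm⟩
  · rintro ⟨k, hk, rfl⟩
    refine ⟨r + 1 - k, by omega, ?_⟩
    rw [P.top _ (by omega) (by omega), Nat.sub_sub_self (by omega)]

theorem a_pos_of_rowA_subset {n p : ℕ} (h : P.rowA n ⊆ P.rowA 0) (hp : p ∈ Icc (n + 1) r) :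
    0 < P.a n p := by
  rw [rowA_zero_eq] at h
  obtain ⟨k, hk, hka⟩ := mem_image.1 (h (mem_image_of_mem _ hp))
  exact hka ▸ Lfun_pos l (mem_Icc.1 hk).1

open scoped Classical

noncomputable def maxCountB (k : ℕ) : ℕ := #{j ∈ Icc k r | P.MaximalB k j}

noncomputable def maxCountA (k : ℕ) : ℕ := #{j ∈ Icc (k + 1) r | P.MaximalA k j}

/- In a stable pattern, `b_{n+1}` is `a_n` with the entry `droppedA n` deleted and `a_{n+1}` is
`b_{n+1}` with the entry `droppedB n` deleted (`Stable.b_succ_eq`, `Stable.a_succ_add_one_eq`);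
`droppedA n` is the padding `a_{n,r+1} = 0` when no entry of `b_{n+1}` is maximal. -/

noncomputable def droppedA (n : ℕ) : ℕ := P.a n (r + 1 - P.maxCountB (n + 1))

noncomputable def droppedB (n : ℕ) : ℕ := P.b (n + 1) (n + 1 + P.maxCountA (n + 1))

theorem maxCountB_le (n : ℕ) : P.maxCountB (n + 1) ≤ r - n := by
  have := card_filter_le (Icc (n + 1) r) (P.MaximalB (n + 1))
  rw [Nat.card_Icc] at this
  exact this.trans_eq (by omega)

theorem maxCountA_le (n : ℕ) : P.maxCountA (n + 1) ≤ r - (n + 1) := by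
  have := card_filter_le (Icc (n + 1 + 1) r) (P.MaximalA (n + 1))
  rw [Nat.card_Icc] at this
  exact this.trans_eq (by omega)

theorem maxCountB_pos_of_droppedA_pos {n : ℕ} (hA : 0 < P.droppedA n) :
    0 < P.maxCountB (n + 1) := by
  by_contra h
  rw [droppedA, Nat.eq_zero_of_not_pos h, P.a_zero n (r + 1 - 0) (by omega)] at hA
  omega

theorem maxCountB_eq_zero_of_droppedA_eq_zero {n : ℕ} (hn : n < r)
    (hpos : ∀ p ∈ Icc (n + 1) r, 0 < P.a n p) (hA : P.droppedA n = 0) :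
    P.maxCountB (n + 1) = 0 := by
  by_contra h
  have := P.maxCountB_le n
  have := hpos (r + 1 - P.maxCountB (n + 1)) (mem_Icc.2 ⟨by omega, by omega⟩)
  rw [droppedA] at hA
  omega

variable {P}

theorem Strict.strictAntiOn_a (hs : P.Strict) {n : ℕ} (hn : n < r) :
    StrictAntiOn (P.a n) (Icc (n + 1) r) := by
  rw [coe_Icc]
  exact strictAntiOn_of_add_one_lt Set.ordConnected_Icc fun q _ hq hq' =>
    hs.1 n q hn hq.1 hq'.2

theorem Strict.sa_eq_sum_rowA (hs : P.Strict) {n : ℕ} (hn : n < r) :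
    P.sa n = ∑ x ∈ P.rowA n, (x : ℤ) := by
  rw [rowA, sum_image (hs.strictAntiOn_a hn).injOn, sa]

theorem Strict.card_filter_rowA_lt (hs : P.Strict) {n k : ℕ} (hn : n < r)
    (hk : k ∈ Icc (n + 1) r) : #{x ∈ P.rowA n | P.a n k < x} = k - (n + 1) := by
  have hanti := hs.strictAntiOn_a hn
  rw [rowA, filter_image, card_image_of_injOn (hanti.injOn.mono (filter_subset _ _))]
  have : {p ∈ Icc (n + 1) r | P.a n k < P.a n p} = Ico (n + 1) k := by
    ext p
    simp only [mem_filter, mem_Icc, mem_Ico]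
    rw [mem_Icc] at hk
    constructor
    · rintro ⟨hp, hlt⟩
      refine ⟨hp.1, lt_of_not_ge fun hkp => hlt.not_ge ?_⟩
      exact hanti.antitoneOn (by simpa using hk) (by simpa using hp) hkp
    · rintro ⟨hp, hpk⟩
      exact ⟨⟨hp, by omega⟩,
        hanti (by simpa using ⟨hp, by omega⟩) (by simpa using hk) hpk⟩
  rw [this, Nat.card_Ico]

theorem Stable.maximalB_add_one (hP : P.Stable) {k j : ℕ} (hk : 1 ≤ k) (hkj : k ≤ j)
    (hj : j < r) (h : P.MaximalB k j) : P.MaximalB k (j + 1) := by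
  refine (hP.2.1 k (j + 1) hk (by omega) hj).resolve_left fun hmin => ?_
  have hlt := hP.1.2 k j hk hkj hj
  rcases h with ⟨-, h⟩ | ⟨rfl, -⟩
  · rw [MinimalB] at hmin
    omega
  · omega

theorem Stable.maximalA_sub_one (hP : P.Stable) {k j : ℕ} (hk : 1 ≤ k) (hkr : k < r)
    (hkj : k + 1 < j) (hj : j ≤ r) (h : P.MaximalA k j) : P.MaximalA k (j - 1) := by
  refine (hP.2.2 k (j - 1) hk hkr (by omega) (by omega)).resolve_left fun hmin => ?_
  have hlt := hP.1.1 k (j - 1) hkr (by omega) (by omega)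
  rw [Nat.sub_add_cancel (by omega)] at hlt
  rw [MinimalA] at hmin
  rw [MaximalA] at h
  omega

theorem Stable.b_succ_eq (hP : P.Stable) {n q : ℕ} (hn : n < r) (hq : q ∈ Icc (n + 1) r) :
    P.b (n + 1) q = P.a n (Nat.succAbove (r + 1 - P.maxCountB (n + 1)) q) := by
  have hmax : P.MaximalB (n + 1) q ↔ r < q + P.maxCountB (n + 1) :=
    Nat.iff_lt_add_card_filter_of_succ (p := P.MaximalB (n + 1))
      (fun j h₁ h₂ => hP.maximalB_add_one (Nat.le_add_left 1 n) h₁ h₂) hq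
  have := P.maxCountB_le n
  rw [mem_Icc] at hq
  unfold Nat.succAbove
  split_ifs with h
  · have hmin := (hP.2.1 (n + 1) q (by omega) hq.1 hq.2).resolve_right
      (fun h' => by have := hmax.1 h'; omega)
    simpa [MinimalB] using hmin
  · rcases hmax.2 (by omega) with ⟨-, h'⟩ | ⟨rfl, h'⟩
    · simpa using h'
    · rw [h', P.a_zero n (q + 1) (by omega)]

theorem Stable.a_succ_add_one_eq (hP : P.Stable) {n q : ℕ} (hn : n < r)
    (hq : q ∈ Icc (n + 1) (r - 1)) :
    P.a (n + 1) (q + 1) = P.b (n + 1) (Nat.succAbove (n + 1 + P.maxCountA (n + 1)) q) := by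
  rw [mem_Icc] at hq
  have hmax : P.MaximalA (n + 1) (q + 1) ↔ q + 1 < n + 1 + 1 + P.maxCountA (n + 1) :=
    Nat.iff_lt_add_card_filter_of_pred (p := P.MaximalA (n + 1))
      (fun j h₁ h₂ => hP.maximalA_sub_one (by omega) (by omega) h₁ h₂)
      (mem_Icc.2 ⟨by omega, by omega⟩)
  unfold Nat.succAbove
  split_ifs with h
  · exact hmax.2 (by omega)
  · exact (hP.2.2 (n + 1) (q + 1) (by omega) (by omega) (by omega) (by omega)).resolve_right
      (fun h' => by have := hmax.1 h'; omega)

theorem Stable.droppedB_eq_of_maxCountB_eq_zero (hP : P.Stable) {n : ℕ} (hn : n < r)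
    (hmB : P.maxCountB (n + 1) = 0) : P.droppedB n = P.a n (n + 1 + P.maxCountA (n + 1)) := by
  have := P.maxCountA_le n
  rw [droppedB, hP.b_succ_eq hn (mem_Icc.2 ⟨by omega, by omega⟩), hmB,
    Nat.succAbove_of_lt (by omega)]

theorem Stable.add_maxCountA_eq_of_droppedB_eq_zero (hP : P.Stable) {n : ℕ} (hn : n < r)
    (hpos : ∀ p ∈ Icc (n + 1) r, 0 < P.a n p) (hB : P.droppedB n = 0) :
    n + 1 + P.maxCountA (n + 1) = r := by
  have := P.maxCountA_le n
  by_contra h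
  rw [droppedB, hP.b_succ_eq hn (mem_Icc.2 ⟨by omega, by omega⟩)] at hB
  have := hpos (Nat.succAbove (r + 1 - P.maxCountB (n + 1)) (n + 1 + P.maxCountA (n + 1)))
    (by unfold Nat.succAbove; split_ifs <;> simp only [mem_Icc] <;> omega)
  omega

theorem Stable.sb_succ_add_droppedA (hP : P.Stable) {n : ℕ} (hn : n < r) :
    P.sb (n + 1) + P.droppedA n = P.sa n := by
  have := P.maxCountB_le n
  have hsum := Nat.sum_Icc_succAbove_add (fun q => (P.a n q : ℤ)) (lo := n + 1) (hi := r)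
    (k := r + 1 - P.maxCountB (n + 1)) (by omega) (by omega)
  rw [sum_Icc_succ_top (by omega), P.a_zero n (r + 1) (by omega)] at hsum
  rw [sb, sum_congr rfl fun q hq => by rw [hP.b_succ_eq hn hq], droppedA, sa]
  simpa using hsum

theorem Stable.sa_succ_add_droppedB (hP : P.Stable) {n : ℕ} (hn : n < r) :
    P.sa (n + 1) + P.droppedB n = P.sb (n + 1) := by
  have := P.maxCountA_le n
  have hsum := Nat.sum_Icc_succAbove_add (fun q => (P.b (n + 1) q : ℤ)) (lo := n + 1)
    (hi := r - 1) (k := n + 1 + P.maxCountA (n + 1)) (by omega) (by omega)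
  rw [Nat.sub_add_cancel (by omega)] at hsum
  rw [sa, Nat.Icc_add_one_left_eq_image _ (by omega), sum_image (add_left_injective 1).injOn,
    sb, droppedB, ← hsum]
  congr 1
  exact sum_congr rfl fun q hq => by rw [hP.a_succ_add_one_eq hn hq]

theorem Stable.wgt_eq (hP : P.Stable) {n : ℕ} (hn : n < r) :
    P.wgt (r - n) = P.droppedA n - P.droppedB n := by
  have h₁ := hP.sb_succ_add_droppedA hn
  have h₂ := hP.sa_succ_add_droppedB hn
  rw [wgt, Nat.sub_sub_self hn.le, show r + 1 - (r - n) = n + 1 by omega]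
  linarith

theorem Stable.sa_eq_sum_dropped (hP : P.Stable) {n : ℕ} (hn : n ≤ r) :
    P.sa n = ∑ m ∈ Ico n r, ((P.droppedA m : ℤ) + P.droppedB m) := by
  induction hn using Nat.decreasingInduction with
  | self => simp [sa]
  | of_succ n hn ih =>
    rw [sum_eq_sum_Ico_succ_bot hn, ← ih, ← hP.sb_succ_add_droppedA hn,
      ← hP.sa_succ_add_droppedB hn]
    ring

theorem Stable.exists_a_succ_eq_succAbove (hP : P.Stable) {n : ℕ} (hn : n < r)
    (hpos : ∀ p ∈ Icc (n + 1) r, 0 < P.a n p) (hdrop : P.droppedA n = 0 ∨ P.droppedB n = 0) :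
    ∃ k ∈ Icc (n + 1) r, P.a n k = P.droppedA n + P.droppedB n ∧
      ∀ q ∈ Icc (n + 1) (r - 1), P.a (n + 1) (q + 1) = P.a n (Nat.succAbove k q) := by
  have hmA := P.maxCountA_le n
  by_cases hA : P.droppedA n = 0
  · have hmB := P.maxCountB_eq_zero_of_droppedA_eq_zero hn hpos hA
    refine ⟨n + 1 + P.maxCountA (n + 1), mem_Icc.2 ⟨by omega, by omega⟩,
      by rw [hA, zero_add, hP.droppedB_eq_of_maxCountB_eq_zero hn hmB], fun q hq => ?_⟩
    have hq' := mem_Icc.1 hq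
    have hk : Nat.succAbove (n + 1 + P.maxCountA (n + 1)) q ∈ Icc (n + 1) r := by
      unfold Nat.succAbove; split_ifs <;> simp only [mem_Icc] <;> omega
    rw [hP.a_succ_add_one_eq hn hq, hP.b_succ_eq hn hk, hmB,
      Nat.succAbove_of_lt (by simp only [mem_Icc] at hk; omega)]
  · have hB := hdrop.resolve_left hA
    have hmB := P.maxCountB_pos_of_droppedA_pos (Nat.pos_of_ne_zero hA)
    have hmB' := P.maxCountB_le n
    refine ⟨r + 1 - P.maxCountB (n + 1), mem_Icc.2 ⟨by omega, by omega⟩,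
      by rw [hB, add_zero, droppedA], fun q hq => ?_⟩
    have hq' := mem_Icc.1 hq
    rw [hP.a_succ_add_one_eq hn hq, hP.add_maxCountA_eq_of_droppedB_eq_zero hn hpos hB,
      Nat.succAbove_of_lt (by omega), hP.b_succ_eq hn (mem_Icc.2 ⟨hq'.1, by omega⟩)]

theorem Stable.rowA_succ (hP : P.Stable) {n : ℕ} (hn : n < r)
    (hpos : ∀ p ∈ Icc (n + 1) r, 0 < P.a n p) (hdrop : P.droppedA n = 0 ∨ P.droppedB n = 0) :
    P.rowA (n + 1) = (P.rowA n).erase (P.droppedA n + P.droppedB n) := by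
  obtain ⟨k, hk, hak, hsucc⟩ := hP.exists_a_succ_eq_succAbove hn hpos hdrop
  have hk' := mem_Icc.1 hk
  rw [rowA, Nat.Icc_add_one_left_eq_image _ (by omega), image_image,
    image_congr (f := P.a (n + 1) ∘ (· + 1)) (g := P.a n ∘ Nat.succAbove k) hsucc,
    ← image_image, Nat.image_succAbove_Icc hk'.1 (by omega), Nat.sub_add_cancel (by omega),
    image_erase_of_injOn (hP.1.strictAntiOn_a hn).injOn hk, hak, rowA]

theorem image_natAbs_wgt_eq_rowA_zero
    (hbij : Set.BijOn (fun k => (P.wgt k).natAbs) (Icc 1 r) (P.rowA 0)) :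
    (Icc 1 r).image (fun k => (P.wgt k).natAbs) = P.rowA 0 := by
  rw [← coe_inj, coe_image]
  exact hbij.image_eq

theorem Stable.droppedA_eq_zero_or_droppedB_eq_zero (hP : P.Stable)
    (hbij : Set.BijOn (fun k => (P.wgt k).natAbs) (Icc 1 r) (P.rowA 0)) {n : ℕ} (hn : n < r) :
    P.droppedA n = 0 ∨ P.droppedB n = 0 := by
  have hle : ∀ m ∈ Ico 0 r, |P.wgt (r - m)| ≤ (P.droppedA m : ℤ) + P.droppedB m := by
    intro m hm
    rw [hP.wgt_eq (mem_Ico.1 hm).2]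
    exact abs_sub_le_iff.2 ⟨by omega, by omega⟩
  have hsum : ∑ m ∈ Ico 0 r, |P.wgt (r - m)|
      = ∑ m ∈ Ico 0 r, ((P.droppedA m : ℤ) + P.droppedB m) := by
    rw [← hP.sa_eq_sum_dropped (Nat.zero_le r), hP.1.sa_eq_sum_rowA (n.zero_le.trans_lt hn),
      ← image_natAbs_wgt_eq_rowA_zero hbij, sum_image hbij.injOn]
    refine sum_nbij' (r - ·) (r - ·) ?_ ?_ ?_ ?_ fun m _ => (Int.natCast_natAbs _).symm <;>
      intro m hm <;> simp only [mem_Ico, mem_Icc] at hm ⊢ <;> omega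
  have heq := (sum_eq_sum_iff_of_le hle).1 hsum n (mem_Ico.2 ⟨n.zero_le, hn⟩)
  rw [hP.wgt_eq hn] at heq
  rcases abs_cases ((P.droppedA n : ℤ) - P.droppedB n) with ⟨h, -⟩ | ⟨h, -⟩ <;> omega

theorem Stable.natAbs_wgt_eq (hP : P.Stable)
    (hbij : Set.BijOn (fun k => (P.wgt k).natAbs) (Icc 1 r) (P.rowA 0)) {n : ℕ} (hn : n < r) :
    (P.wgt (r - n)).natAbs = P.droppedA n + P.droppedB n := by
  rw [hP.wgt_eq hn]
  rcases hP.droppedA_eq_zero_or_droppedB_eq_zero hbij hn with h | h <;> simp [h]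

theorem Stable.rowA_eq_image (hP : P.Stable)
    (hbij : Set.BijOn (fun k => (P.wgt k).natAbs) (Icc 1 r) (P.rowA 0)) {n : ℕ} (hn : n ≤ r) :
    P.rowA n = (Icc 1 (r - n)).image fun k => (P.wgt k).natAbs := by
  induction n with
  | zero => exact (image_natAbs_wgt_eq_rowA_zero hbij).symm
  | succ n ih =>
    have hn' : n < r := by omega
    have ih := ih hn'.le
    have hsub : P.rowA n ⊆ P.rowA 0 := by
      rw [ih, ← image_natAbs_wgt_eq_rowA_zero hbij]
      exact image_subset_image (Icc_subset_Icc_right (by omega))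
    have hIcc : Icc 1 (r - (n + 1)) = (Icc 1 (r - n)).erase (r - n) := by
      ext k
      simp only [mem_Icc, mem_erase]
      omega
    rw [hP.rowA_succ hn' (fun p => P.a_pos_of_rowA_subset hsub)
        (hP.droppedA_eq_zero_or_droppedB_eq_zero hbij hn'),
      ← hP.natAbs_wgt_eq hbij hn', ih, hIcc,
      image_erase_of_injOn (hbij.injOn.mono (coe_subset.2 (Icc_subset_Icc_right (by omega))))
        (mem_Icc.2 ⟨by omega, le_rfl⟩)]

theorem Stable.rowA_subset_rowA_zero (hP : P.Stable)
    (hbij : Set.BijOn (fun k => (P.wgt k).natAbs) (Icc 1 r) (P.rowA 0)) {n : ℕ} (hn : n ≤ r) :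
    P.rowA n ⊆ P.rowA 0 := by
  rw [hP.rowA_eq_image hbij hn, ← image_natAbs_wgt_eq_rowA_zero hbij]
  exact image_subset_image (Icc_subset_Icc_right (by omega))

theorem Stable.card_filter_natAbs_wgt_lt (hP : P.Stable)
    (hbij : Set.BijOn (fun k => (P.wgt k).natAbs) (Icc 1 r) (P.rowA 0)) {n : ℕ} (hn : n ≤ r)
    (x : ℕ) : #{k ∈ Icc 1 (r - n) | x < (P.wgt k).natAbs} = #{y ∈ P.rowA n | x < y} := by
  rw [hP.rowA_eq_image hbij hn, filter_image, card_image_of_injOn (hbij.injOn.mono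
    (coe_subset.2 ((filter_subset _ _).trans (Icc_subset_Icc_right (by omega)))))]

theorem Stable.maxCount_of_wgt_neg (hP : P.Stable)
    (hbij : Set.BijOn (fun k => (P.wgt k).natAbs) (Icc 1 r) (P.rowA 0)) {n : ℕ} (hn : n < r)
    (hw : P.wgt (r - n) < 0) :
    P.maxCountB (n + 1) + P.maxCountA (n + 1)
      = #{k ∈ Icc 1 (r - n) | (P.wgt (r - n)).natAbs < (P.wgt k).natAbs} := by
  have hpos := fun p => P.a_pos_of_rowA_subset (p := p) (hP.rowA_subset_rowA_zero hbij hn.le)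
  have hA : P.droppedA n = 0 := by
    rw [hP.wgt_eq hn] at hw
    rcases hP.droppedA_eq_zero_or_droppedB_eq_zero hbij hn with h | h <;> omega
  have hmB := P.maxCountB_eq_zero_of_droppedA_eq_zero hn hpos hA
  have := P.maxCountA_le n
  rw [hP.card_filter_natAbs_wgt_lt hbij hn.le, hP.natAbs_wgt_eq hbij hn, hA, zero_add,
    hP.droppedB_eq_of_maxCountB_eq_zero hn hmB,
    hP.1.card_filter_rowA_lt hn (mem_Icc.2 ⟨by omega, by omega⟩), hmB]
  omega

theorem Stable.maxCount_of_wgt_pos (hP : P.Stable)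
    (hbij : Set.BijOn (fun k => (P.wgt k).natAbs) (Icc 1 r) (P.rowA 0)) {n : ℕ} (hn : n < r)
    (hw : 0 < P.wgt (r - n)) :
    P.maxCountB (n + 1) + P.maxCountA (n + 1)
      + #{k ∈ Icc 1 (r - n) | (P.wgt (r - n)).natAbs < (P.wgt k).natAbs} + 1 = 2 * (r - n) := by
  have hpos := fun p => P.a_pos_of_rowA_subset (p := p) (hP.rowA_subset_rowA_zero hbij hn.le)
  have hB : P.droppedB n = 0 := by
    rw [hP.wgt_eq hn] at hw
    rcases hP.droppedA_eq_zero_or_droppedB_eq_zero hbij hn with h | h <;> omega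
  have hA : 0 < P.droppedA n := by
    rw [hP.wgt_eq hn, hB] at hw
    omega
  have hmB := P.maxCountB_pos_of_droppedA_pos hA
  have := P.maxCountB_le n
  have hmA := hP.add_maxCountA_eq_of_droppedB_eq_zero hn hpos hB
  rw [hP.card_filter_natAbs_wgt_lt hbij hn.le, hP.natAbs_wgt_eq hbij hn, hB, add_zero,
    droppedA, hP.1.card_filter_rowA_lt hn (mem_Icc.2 ⟨by omega, by omega⟩)]
  omega

end GTPattern

section SignedPermutation

variable {r : ℕ} {l : ℕ → ℕ} {P : GTPattern r l}
  {σ : Equiv.Perm (Fin r)} {ε : Fin r → ℤˣ}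

theorem natAbs_wgt_of_signedPerm
    (hw : ∀ j : Fin r, (ε j : ℤ) * (Lfun l ((σ⁻¹ j).1 + 1) : ℤ) = -P.wgt (j.1 + 1))
    (j : Fin r) : (P.wgt (j.1 + 1)).natAbs = Lfun l ((σ⁻¹ j).1 + 1) := by
  rw [← Int.natAbs_neg, ← hw j, Int.natAbs_mul]
  simp

theorem natAbs_wgt_lt_natAbs_wgt_iff
    (hw : ∀ j : Fin r, (ε j : ℤ) * (Lfun l ((σ⁻¹ j).1 + 1) : ℤ) = -P.wgt (j.1 + 1))
    (i j : Fin r) :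
    (P.wgt (i.1 + 1)).natAbs < (P.wgt (j.1 + 1)).natAbs ↔ σ⁻¹ i < σ⁻¹ j := by
  rw [natAbs_wgt_of_signedPerm hw, natAbs_wgt_of_signedPerm hw, (Lfun_strictMono l).lt_iff_lt,
    Fin.lt_def, Nat.add_lt_add_iff_right]

theorem wgt_neg_of_signedPerm
    (hw : ∀ j : Fin r, (ε j : ℤ) * (Lfun l ((σ⁻¹ j).1 + 1) : ℤ) = -P.wgt (j.1 + 1))
    {j : Fin r} (he : ε j = 1) : P.wgt (j.1 + 1) < 0 := by
  have h := hw j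
  rw [he, Units.val_one, one_mul] at h
  have := Lfun_pos l (j := (σ⁻¹ j).1 + 1) (by omega)
  omega

theorem wgt_pos_of_signedPerm
    (hw : ∀ j : Fin r, (ε j : ℤ) * (Lfun l ((σ⁻¹ j).1 + 1) : ℤ) = -P.wgt (j.1 + 1))
    {j : Fin r} (he : ε j = -1) : 0 < P.wgt (j.1 + 1) := by
  have h := hw j
  rw [he, Units.val_neg, Units.val_one, neg_one_mul] at h
  have := Lfun_pos l (j := (σ⁻¹ j).1 + 1) (by omega)
  omega

theorem bijOn_natAbs_wgt_of_signedPerm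
    (hw : ∀ j : Fin r, (ε j : ℤ) * (Lfun l ((σ⁻¹ j).1 + 1) : ℤ) = -P.wgt (j.1 + 1)) :
    Set.BijOn (fun k => (P.wgt k).natAbs) (Icc 1 r) (P.rowA 0) := by
  have himage : (Icc 1 r).image (fun k => (P.wgt k).natAbs) = P.rowA 0 := by
    rw [P.rowA_zero_eq, ← Fin.image_val_add_one_univ, image_image, image_image]
    simp only [Function.comp_def, natAbs_wgt_of_signedPerm hw]
    conv_rhs => rw [← image_univ_equiv (σ⁻¹ : Equiv.Perm (Fin r)), image_image]
    rfl
  have hinj : Set.InjOn (fun k => (P.wgt k).natAbs) (Icc 1 r) := injOn_of_card_image_eq (by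
    rw [himage, P.rowA_zero_eq, card_image_of_injective _ (Lfun_strictMono l).injective])
  have := hinj.bijOn_image
  rwa [← coe_image, himage] at this

theorem card_filter_natAbs_wgt_lt_of_signedPerm
    (hw : ∀ j : Fin r, (ε j : ℤ) * (Lfun l ((σ⁻¹ j).1 + 1) : ℤ) = -P.wgt (j.1 + 1))
    (i : Fin r) :
    #{k ∈ Icc 1 (i.1 + 1) | (P.wgt (i.1 + 1)).natAbs < (P.wgt k).natAbs}
      = #{j | j < i ∧ σ⁻¹ i < σ⁻¹ j} := by
  symm
  refine card_nbij (fun j => j.1 + 1) (fun j hj => ?_) (fun j _ j' _ h => ?_) (fun k hk => ?_)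
  · simp only [coe_filter, mem_univ, true_and, Set.mem_ofPred_eq, mem_Icc] at hj ⊢
    exact ⟨⟨by omega, by rw [Fin.lt_def] at hj; omega⟩,
      (natAbs_wgt_lt_natAbs_wgt_iff hw i j).2 hj.2⟩
  · exact Fin.ext (by simpa using h)
  · simp only [coe_filter, mem_Icc, Set.mem_ofPred_eq] at hk
    have hk' : k - 1 < r := by omega
    have hlt := (natAbs_wgt_lt_natAbs_wgt_iff hw i ⟨k - 1, hk'⟩).1
      (by rw [Nat.sub_add_cancel hk.1.1]; exact hk.2)
    refine ⟨⟨k - 1, hk'⟩, ?_, by simp only; omega⟩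
    simp only [coe_filter, mem_univ, true_and, Set.mem_ofPred_eq, Fin.lt_def]
    refine ⟨lt_of_le_of_ne (by omega) fun h => ?_, hlt⟩
    rw [show (⟨k - 1, hk'⟩ : Fin r) = i from Fin.ext h] at hlt
    exact lt_irrefl _ hlt

end SignedPermutation

open scoped Classical in
theorem gt_stable_maximal_count_general (r : ℕ) (l : ℕ → ℕ)
    (P : GTPattern r l) (hP : P.Stable)
    (σ : Equiv.Perm (Fin r)) (ε : Fin r → ℤˣ)
    (hw : ∀ j : Fin r,
      (ε j : ℤ) * (Lfun l ((σ⁻¹ j).1 + 1) : ℤ) = - P.wgt (j.1 + 1)) :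
    ∀ i : Fin r,
      ((Finset.Icc (r - i.1) r).filter (fun j => P.MaximalB (r - i.1) j)).card
        + ((Finset.Icc (r - i.1 + 1) r).filter (fun j => P.MaximalA (r - i.1) j)).card
      = if ε i = 1 then
          (Finset.univ.filter (fun j : Fin r => j < i ∧ σ⁻¹ i < σ⁻¹ j)).card
        else
          (i.1 + 1) + (Finset.univ.filter (fun j : Fin r => j < i ∧ σ⁻¹ j < σ⁻¹ i)).card := by
  intro i
  have hbij := bijOn_natAbs_wgt_of_signedPerm hw
  obtain ⟨n, hn, hni⟩ : ∃ n, n < r ∧ r - n = i.1 + 1 := ⟨r - 1 - i.1, by omega, by omega⟩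
  have hcount := card_filter_natAbs_wgt_lt_of_signedPerm hw i
  have hsplit := card_filter_lt_add_card_filter_gt σ⁻¹.injective i
  rw [filter_gt_eq_Iio, Fin.card_Iio] at hsplit
  show P.maxCountB (r - i.1) + P.maxCountA (r - i.1) = _
  rw [show r - i.1 = n + 1 by omega]
  rcases Int.units_eq_one_or (ε i) with he | he
  · rw [if_pos he, hP.maxCount_of_wgt_neg hbij hn (hni ▸ wgt_neg_of_signedPerm hw he), hni,
      hcount]
  · have := hP.maxCount_of_wgt_pos hbij hn (hni ▸ wgt_pos_of_signedPerm hw he)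
    rw [hni, hcount] at this
    rw [if_neg (by simp [he])]
    omega

open scoped Classical in
/-- Let `P ∈ GT(λ+ρ)` be a stable GT-pattern of rank `r` with
associated signed permutation `w = (σ, ε) ∈ W(C_r)` (the unique `w` with
`w(λ+ρ) = −(wgt_1(P), …, wgt_r(P))`), and let `m_i(P)` be the total number of
maximal entries in rows `b_{r+1−i}` and `a_{r+1−i}` of `P`.  Then
`m_i(P) = inv_i(w⁻¹)` if `ε^{(i)} = +1` and `m_i(P) = i + pr_i(w⁻¹)` if
`ε^{(i)} = −1`, where `inv_i(w⁻¹) = #{ j < i : σ⁻¹(j) > σ⁻¹(i) }` and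
`pr_i(w⁻¹) = #{ j < i : σ⁻¹(j) < σ⁻¹(i) }`.  (`Fin r` indexes `1, …, r` via
`i ↦ i.1 + 1`, so row `b_{r+1−i}` is row `b_{r−i.1}`.) -/
theorem gt_stable_maximal_count (r : ℕ) (hr : 1 ≤ r) (l : ℕ → ℕ)
    (P : GTPattern r l) (hP : P.Stable)
    (σ : Equiv.Perm (Fin r)) (ε : Fin r → ℤˣ)
    (hw : ∀ j : Fin r,
      (ε j : ℤ) * (Lfun l ((σ⁻¹ j).1 + 1) : ℤ) = - P.wgt (j.1 + 1)) :
    ∀ i : Fin r,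
      ((Finset.Icc (r - i.1) r).filter (fun j => P.MaximalB (r - i.1) j)).card
        + ((Finset.Icc (r - i.1 + 1) r).filter (fun j => P.MaximalA (r - i.1) j)).card
      = if ε i = 1 then
          (Finset.univ.filter (fun j : Fin r => j < i ∧ σ⁻¹ i < σ⁻¹ j)).card
        else
          (i.1 + 1) + (Finset.univ.filter (fun j : Fin r => j < i ∧ σ⁻¹ j < σ⁻¹ i)).card :=
  gt_stable_maximal_count_general r l P hP σ ε hw
end

section
/- Let L_1 < L_2 < ⋯ < L_r be positive real numbers, λ+ρ = (L_1, …, L_r) ∈ ℝ^r, and d_λ(α) = 2⟨λ+ρ, α⟩/⟨α, α⟩. Let w = (σ, ε) ∈ W(C_r), fix 1 ≤ i ≤ r, and let D_i = { d_λ(α) : α ∈ Φ_w^{(i)} }. Then: if ε^{(i)} = +1, D_i = { L_{σ^{−1}(j)} − L_{σ^{−1}(i)} : j < i and σ^{−1}(j) > σ^{−1}(i) }; and if ε^{(i)} = −1, D_i = { L_{σ^{−1}(i)} } ∪ { L_{σ^{−1}(j)} + L_{σ^{−1}(i)} : j < i } ∪ { L_{σ^{−1}(i)} − L_{σ^{−1}(j)}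 : j < i and σ^{−1}(j) < σ^{−1}(i) }. -/
/-! The root system `C_r` in `ℝ^r`, signed permutations, and the sets `Φ_w`. -/

/-- The standard basis vector `e k` of `ℝ^r`. -/
noncomputable def eVec (r : ℕ) (k : Fin r) : Fin r → ℝ := fun j => if j = k then 1 else 0

/-- The positive roots of `C_r`:
`Φ⁺ = { 2e_k } ∪ { e_m + e_l, e_m − e_l : l < m }`. -/
def PhiPlus (r : ℕ) : Set (Fin r → ℝ) :=
  {α | (∃ k : Fin r, α = (2 : ℝ) • eVec r k) ∨
       (∃ l m : Fin r, l < m ∧ (α = eVec r m + eVec r l ∨ α = eVec r m - eVec r l))}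

/-- The action of a signed permutation `w = (σ, ε)` on `ℝ^r`:
`w(t)_j = ε^{(j)} t_{σ⁻¹(j)}`. -/
noncomputable def wAct {r : ℕ} (σ : Equiv.Perm (Fin r)) (ε : Fin r → ℤˣ) (t : Fin r → ℝ) :
    Fin r → ℝ :=
  fun j => ((ε j : ℤ) : ℝ) * t (σ⁻¹ j)

/-- `Φ_w = { α ∈ Φ⁺ : w(α) ∈ Φ⁻ }` where `Φ⁻ = −Φ⁺`. -/
def PhiW {r : ℕ} (σ : Equiv.Perm (Fin r)) (ε : Fin r → ℤˣ) : Set (Fin r → ℝ) :=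
  {α | α ∈ PhiPlus r ∧ -(wAct σ ε α) ∈ PhiPlus r}

/-- The type-L root `α_{i,w} = 2 e_{σ⁻¹(i)}`. -/
noncomputable def rootL {r : ℕ} (σ : Equiv.Perm (Fin r)) (i : Fin r) : Fin r → ℝ :=
  (2 : ℝ) • eVec r (σ⁻¹ i)

/-- The type-S⁺ root `α⁺_{i,j,w} = e_{σ⁻¹(j)} + e_{σ⁻¹(i)}`. -/
noncomputable def rootP {r : ℕ} (σ : Equiv.Perm (Fin r)) (i j : Fin r) : Fin r → ℝ :=
  eVec r (σ⁻¹ j) + eVec r (σ⁻¹ i)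

/-- The type-S⁻ root `α⁻_{i,j,w}`, equal to `e_{σ⁻¹(j)} − e_{σ⁻¹(i)}` if
`σ⁻¹(j) > σ⁻¹(i)` and to `e_{σ⁻¹(i)} − e_{σ⁻¹(j)}` otherwise. -/
noncomputable def rootM {r : ℕ} (σ : Equiv.Perm (Fin r)) (i j : Fin r) : Fin r → ℝ :=
  if σ⁻¹ i < σ⁻¹ j then eVec r (σ⁻¹ j) - eVec r (σ⁻¹ i)
  else eVec r (σ⁻¹ i) - eVec r (σ⁻¹ j)

/-- `Φ_w^{(i)}`: those roots `α_{i,w}`, `α⁺_{i,j,w}`, `α⁻_{i,j,w}` (`j < i`)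
that lie in `Φ_w`. -/
def PhiWi {r : ℕ} (σ : Equiv.Perm (Fin r)) (ε : Fin r → ℤˣ) (i : Fin r) :
    Set (Fin r → ℝ) :=
  {α | (α = rootL σ i ∨ ∃ j : Fin r, j < i ∧ (α = rootP σ i j ∨ α = rootM σ i j)) ∧
       α ∈ PhiW σ ε}

/-- The standard inner product on `ℝ^r`. -/
noncomputable def ip {r : ℕ} (x y : Fin r → ℝ) : ℝ := ∑ j, x j * y j

/-- `d_λ(α) = 2⟨λ+ρ, α⟩ / ⟨α, α⟩`, for `λ+ρ = (L_1, …, L_r)`. -/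
noncomputable def dlam {r : ℕ} (L : Fin r → ℝ) (α : Fin r → ℝ) : ℝ := 2 * ip L α / ip α α

/-! Since `w(e_{σ⁻¹(k)}) = ε^{(k)} e_k`, each candidate root `α` is sent by `w` to a combination
of `e_j` and `e_i` with `j < i`, and its coefficient at the top coordinate `e_i` is `±ε^{(i)}`.
A positive root has positive top coordinate, so whether `α ∈ Φ_w` is decided by `ε^{(i)}`
(together with the order of `σ⁻¹(i)` and `σ⁻¹(j)` for `α⁻_{i,j,w}`); `d_λ` of the surviving
roots is then a direct computation. -/

section

variable {r : ℕ}

lemma eVec_eq_single (k : Fin r) : eVec r k = Pi.single k 1 := by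
  funext j
  simp [eVec, Pi.single_apply]

lemma ip_eq_dotProduct (x y : Fin r → ℝ) : ip x y = x ⬝ᵥ y := rfl

lemma dlam_two_smul_eVec (L : Fin r → ℝ) (k : Fin r) : dlam L ((2 : ℝ) • eVec r k) = L k := by
  simp [dlam, ip_eq_dotProduct, eVec_eq_single]
  ring

lemma dlam_eVec_add_eVec (L : Fin r → ℝ) {p q : Fin r} (hpq : p ≠ q) :
    dlam L (eVec r p + eVec r q) = L p + L q := by
  simp [dlam, ip_eq_dotProduct, eVec_eq_single, hpq, hpq.symm]
  ring

lemma dlam_eVec_sub_eVec (L : Fin r → ℝ) {p q : Fin r} (hpq : p ≠ q) :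
    dlam L (eVec r p - eVec r q) = L p - L q := by
  simp [dlam, ip_eq_dotProduct, eVec_eq_single, hpq, hpq.symm]
  ring

lemma wAct_add (σ : Equiv.Perm (Fin r)) (ε : Fin r → ℤˣ) (x y : Fin r → ℝ) :
    wAct σ ε (x + y) = wAct σ ε x + wAct σ ε y := by
  funext j
  simp only [wAct, Pi.add_apply, mul_add]

lemma wAct_sub (σ : Equiv.Perm (Fin r)) (ε : Fin r → ℤˣ) (x y : Fin r → ℝ) :
    wAct σ ε (x - y) = wAct σ ε x - wAct σ ε y := by
  funext j
  simp only [wAct, Pi.sub_apply, mul_sub]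

lemma wAct_smul (σ : Equiv.Perm (Fin r)) (ε : Fin r → ℤˣ) (c : ℝ) (x : Fin r → ℝ) :
    wAct σ ε (c • x) = c • wAct σ ε x := by
  funext j
  simp only [wAct, Pi.smul_apply, smul_eq_mul]
  ring

lemma wAct_eVec_inv (σ : Equiv.Perm (Fin r)) (ε : Fin r → ℤˣ) (i : Fin r) :
    wAct σ ε (eVec r (σ⁻¹ i)) = ((ε i : ℤ) : ℝ) • eVec r i := by
  funext j
  by_cases hj : j = i <;> simp [wAct, eVec, hj]

lemma rootM_of_lt (σ : Equiv.Perm (Fin r)) {i j : Fin r} (hσ : σ⁻¹ i < σ⁻¹ j) :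
    rootM σ i j = eVec r (σ⁻¹ j) - eVec r (σ⁻¹ i) :=
  if_pos hσ

lemma rootM_of_gt (σ : Equiv.Perm (Fin r)) {i j : Fin r} (hσ : σ⁻¹ j < σ⁻¹ i) :
    rootM σ i j = eVec r (σ⁻¹ i) - eVec r (σ⁻¹ j) :=
  if_neg hσ.not_gt

lemma pos_of_mem_phiPlus {v : Fin r → ℝ} (hv : v ∈ PhiPlus r) {m : Fin r}
    (hm : v m ≠ 0) (htop : ∀ n, m < n → v n = 0) : 0 < v m := by
  rcases hv with ⟨k, rfl⟩ | ⟨l, m', hlm, rfl | rfl⟩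
  · by_cases hk : m = k <;> simp_all [eVec]
  all_goals
    rcases lt_trichotomy m m' with h | rfl | h
    · simpa [eVec, hlm.ne', h.ne'] using htop m' h
    · simp [eVec, hlm.ne']
    · simp [eVec, h.ne', (hlm.trans h).ne'] at hm

lemma two_mul_smul_eVec_mem_phiPlus_iff (q : Fin r) (u : ℤˣ) :
    (2 * ((u : ℤ) : ℝ)) • eVec r q ∈ PhiPlus r ↔ u = 1 := by
  constructor
  · intro hv
    have hpos := pos_of_mem_phiPlus hv (m := q) (by simp [eVec])
      (fun n hn => by simp [eVec, hn.ne'])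
    rcases Int.units_eq_one_or u with rfl | rfl
    · rfl
    · norm_num [eVec] at hpos
  · rintro rfl
    exact Or.inl ⟨q, by norm_num⟩

lemma smul_eVec_add_smul_eVec_mem_phiPlus_iff {p q : Fin r} (hpq : p < q) (u v : ℤˣ) :
    ((u : ℤ) : ℝ) • eVec r p + ((v : ℤ) : ℝ) • eVec r q ∈ PhiPlus r ↔ v = 1 := by
  constructor
  · intro hv
    have hpos := pos_of_mem_phiPlus hv (m := q) (by simp [eVec, hpq.ne'])
      (fun n hn => by simp [eVec, hn.ne', (hpq.trans hn).ne'])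
    rcases Int.units_eq_one_or v with rfl | rfl
    · rfl
    · norm_num [eVec, hpq.ne'] at hpos
  · rintro rfl
    rcases Int.units_eq_one_or u with rfl | rfl
    · exact Or.inr ⟨p, q, hpq, Or.inl (by simp [add_comm])⟩
    · exact Or.inr ⟨p, q, hpq, Or.inr (by simp [sub_eq_neg_add])⟩

section Inversions

variable (σ : Equiv.Perm (Fin r)) (ε : Fin r → ℤˣ)

lemma mem_phiW_rootL_iff (i : Fin r) : rootL σ i ∈ PhiW σ ε ↔ ε i = -1 := by
  have hw : -wAct σ ε (rootL σ i) = (2 * (((-ε i : ℤˣ) : ℤ) : ℝ)) • eVec r i := by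
    rw [rootL, wAct_smul, wAct_eVec_inv]
    push_cast
    module
  rw [PhiW, Set.mem_ofPred_eq, hw, two_mul_smul_eVec_mem_phiPlus_iff, neg_eq_iff_eq_neg]
  exact and_iff_right (Or.inl ⟨σ⁻¹ i, rfl⟩)

lemma mem_phiW_rootP_iff {i j : Fin r} (hji : j < i) : rootP σ i j ∈ PhiW σ ε ↔ ε i = -1 := by
  have hw : -wAct σ ε (rootP σ i j)
      = (((-ε j : ℤˣ) : ℤ) : ℝ) • eVec r j + (((-ε i : ℤˣ) : ℤ) : ℝ) • eVec r i := by
    rw [rootP, wAct_add, wAct_eVec_inv, wAct_eVec_inv]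
    push_cast
    module
  have hpos : rootP σ i j ∈ PhiPlus r := by
    rcases (σ⁻¹.injective.ne hji.ne).lt_or_gt with h | h
    · exact Or.inr ⟨σ⁻¹ j, σ⁻¹ i, h, Or.inl (add_comm _ _)⟩
    · exact Or.inr ⟨σ⁻¹ i, σ⁻¹ j, h, Or.inl rfl⟩
  rw [PhiW, Set.mem_ofPred_eq, hw, smul_eVec_add_smul_eVec_mem_phiPlus_iff hji,
    neg_eq_iff_eq_neg]
  exact and_iff_right hpos

lemma mem_phiW_rootM_iff_of_lt {i j : Fin r} (hji : j < i) (hσ : σ⁻¹ i < σ⁻¹ j) :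
    rootM σ i j ∈ PhiW σ ε ↔ ε i = 1 := by
  have hw : -wAct σ ε (rootM σ i j)
      = (((-ε j : ℤˣ) : ℤ) : ℝ) • eVec r j + ((ε i : ℤ) : ℝ) • eVec r i := by
    rw [rootM_of_lt σ hσ, wAct_sub, wAct_eVec_inv, wAct_eVec_inv]
    push_cast
    module
  rw [PhiW, Set.mem_ofPred_eq, hw, smul_eVec_add_smul_eVec_mem_phiPlus_iff hji, rootM_of_lt σ hσ]
  exact and_iff_right (Or.inr ⟨σ⁻¹ i, σ⁻¹ j, hσ, Or.inr rfl⟩)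

lemma mem_phiW_rootM_iff_of_gt {i j : Fin r} (hji : j < i) (hσ : σ⁻¹ j < σ⁻¹ i) :
    rootM σ i j ∈ PhiW σ ε ↔ ε i = -1 := by
  have hw : -wAct σ ε (rootM σ i j)
      = ((ε j : ℤ) : ℝ) • eVec r j + (((-ε i : ℤˣ) : ℤ) : ℝ) • eVec r i := by
    rw [rootM_of_gt σ hσ, wAct_sub, wAct_eVec_inv, wAct_eVec_inv]
    push_cast
    module
  rw [PhiW, Set.mem_ofPred_eq, hw, smul_eVec_add_smul_eVec_mem_phiPlus_iff hji, rootM_of_gt σ hσ,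
    neg_eq_iff_eq_neg]
  exact and_iff_right (Or.inr ⟨σ⁻¹ j, σ⁻¹ i, hσ, Or.inr rfl⟩)

end Inversions

section PhiWi

variable (σ : Equiv.Perm (Fin r)) (ε : Fin r → ℤˣ) {i : Fin r}

lemma phiWi_of_eq_one (h : ε i = 1) :
    PhiWi σ ε i = rootM σ i '' {j | j < i ∧ σ⁻¹ i < σ⁻¹ j} := by
  have hne : ε i ≠ -1 := h ▸ units_ne_neg_self (1 : ℤˣ)
  ext α
  simp only [PhiWi, Set.mem_ofPred_eq, Set.mem_image]
  constructor
  · rintro ⟨rfl | ⟨j, hj, rfl | rfl⟩, hW⟩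
    · exact absurd ((mem_phiW_rootL_iff σ ε i).1 hW) hne
    · exact absurd ((mem_phiW_rootP_iff σ ε hj).1 hW) hne
    · rcases (σ⁻¹.injective.ne hj.ne).lt_or_gt with hσ | hσ
      · exact absurd ((mem_phiW_rootM_iff_of_gt σ ε hj hσ).1 hW) hne
      · exact ⟨j, ⟨hj, hσ⟩, rfl⟩
  · rintro ⟨j, ⟨hj, hσ⟩, rfl⟩
    exact ⟨Or.inr ⟨j, hj, Or.inr rfl⟩, (mem_phiW_rootM_iff_of_lt σ ε hj hσ).2 h⟩

lemma phiWi_of_eq_neg_one (h : ε i = -1) :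
    PhiWi σ ε i = {rootL σ i} ∪ rootP σ i '' Set.Iio i
      ∪ rootM σ i '' {j | j < i ∧ σ⁻¹ j < σ⁻¹ i} := by
  have hne : ε i ≠ 1 := h ▸ neg_units_ne_self (1 : ℤˣ)
  ext α
  simp only [PhiWi, Set.mem_ofPred_eq, Set.mem_union, Set.mem_singleton_iff, Set.mem_image,
    Set.mem_Iio]
  constructor
  · rintro ⟨rfl | ⟨j, hj, rfl | rfl⟩, hW⟩
    · exact Or.inl (Or.inl rfl)
    · exact Or.inl (Or.inr ⟨j, hj, rfl⟩)
    · rcases (σ⁻¹.injective.ne hj.ne).lt_or_gt with hσ | hσ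
      · exact Or.inr ⟨j, ⟨hj, hσ⟩, rfl⟩
      · exact absurd ((mem_phiW_rootM_iff_of_lt σ ε hj hσ).1 hW) hne
  · rintro ((rfl | ⟨j, hj, rfl⟩) | ⟨j, ⟨hj, hσ⟩, rfl⟩)
    · exact ⟨Or.inl rfl, (mem_phiW_rootL_iff σ ε i).2 h⟩
    · exact ⟨Or.inr ⟨j, hj, Or.inl rfl⟩, (mem_phiW_rootP_iff σ ε hj).2 h⟩
    · exact ⟨Or.inr ⟨j, hj, Or.inr rfl⟩, (mem_phiW_rootM_iff_of_gt σ ε hj hσ).2 h⟩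

end PhiWi

section DlamRoots

variable (L : Fin r → ℝ) (σ : Equiv.Perm (Fin r)) {i j : Fin r}

lemma dlam_rootL (i : Fin r) : dlam L (rootL σ i) = L (σ⁻¹ i) :=
  dlam_two_smul_eVec L _

lemma dlam_rootP (hji : j ≠ i) : dlam L (rootP σ i j) = L (σ⁻¹ j) + L (σ⁻¹ i) :=
  dlam_eVec_add_eVec L (σ⁻¹.injective.ne hji)

lemma dlam_rootM_of_lt (hσ : σ⁻¹ i < σ⁻¹ j) : dlam L (rootM σ i j) = L (σ⁻¹ j) - L (σ⁻¹ i) := by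
  rw [rootM_of_lt σ hσ, dlam_eVec_sub_eVec L hσ.ne']

lemma dlam_rootM_of_gt (hσ : σ⁻¹ j < σ⁻¹ i) : dlam L (rootM σ i j) = L (σ⁻¹ i) - L (σ⁻¹ j) := by
  rw [rootM_of_gt σ hσ, dlam_eVec_sub_eVec L hσ.ne']

end DlamRoots

end

theorem dlam_image_phiWi_general (r : ℕ) (L : Fin r → ℝ)
    (σ : Equiv.Perm (Fin r)) (ε : Fin r → ℤˣ) (i : Fin r) :
    (ε i = 1 →
      dlam L '' PhiWi σ ε i
        = {x : ℝ | ∃ j : Fin r, j < i ∧ σ⁻¹ i < σ⁻¹ j ∧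
            x = L (σ⁻¹ j) - L (σ⁻¹ i)}) ∧
    (ε i = -1 →
      dlam L '' PhiWi σ ε i
        = {L (σ⁻¹ i)}
          ∪ {x : ℝ | ∃ j : Fin r, j < i ∧ x = L (σ⁻¹ j) + L (σ⁻¹ i)}
          ∪ {x : ℝ | ∃ j : Fin r, j < i ∧ σ⁻¹ j < σ⁻¹ i ∧
              x = L (σ⁻¹ i) - L (σ⁻¹ j)}) := by
  refine ⟨fun h => ?_, fun h => ?_⟩
  · rw [phiWi_of_eq_one σ ε h, Set.image_image,
      Set.image_congr fun j hj => dlam_rootM_of_lt L σ hj.2]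
    ext x
    simp [eq_comm, and_assoc]
  · rw [phiWi_of_eq_neg_one σ ε h, Set.image_union, Set.image_union, Set.image_singleton,
      Set.image_image, Set.image_image, dlam_rootL,
      Set.image_congr fun j hj => dlam_rootP L σ (Set.mem_Iio.1 hj).ne,
      Set.image_congr fun j hj => dlam_rootM_of_gt L σ hj.2]
    ext x
    simp [eq_comm, and_assoc]

/-- Let `0 < L_1 < ⋯ < L_r` be real numbers,
`λ+ρ = (L_1, …, L_r)`, `d_λ(α) = 2⟨λ+ρ, α⟩/⟨α, α⟩`, `w = (σ, ε) ∈ W(C_r)`,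
and `D_i = { d_λ(α) : α ∈ Φ_w^{(i)} }`.  If `ε^{(i)} = +1` then
`D_i = { L_{σ⁻¹(j)} − L_{σ⁻¹(i)} : j < i, σ⁻¹(j) > σ⁻¹(i) }`; if
`ε^{(i)} = −1` then `D_i = { L_{σ⁻¹(i)} } ∪ { L_{σ⁻¹(j)} + L_{σ⁻¹(i)} : j < i }
∪ { L_{σ⁻¹(i)} − L_{σ⁻¹(j)} : j < i, σ⁻¹(j) < σ⁻¹(i) }`. -/
theorem dlam_image_phiWi (r : ℕ) (L : Fin r → ℝ) (hpos : ∀ k, 0 < L k)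
    (hmono : StrictMono L) (σ : Equiv.Perm (Fin r)) (ε : Fin r → ℤˣ) (i : Fin r) :
    (ε i = 1 →
      dlam L '' PhiWi σ ε i
        = {x : ℝ | ∃ j : Fin r, j < i ∧ σ⁻¹ i < σ⁻¹ j ∧
            x = L (σ⁻¹ j) - L (σ⁻¹ i)}) ∧
    (ε i = -1 →
      dlam L '' PhiWi σ ε i
        = {L (σ⁻¹ i)}
          ∪ {x : ℝ | ∃ j : Fin r, j < i ∧ x = L (σ⁻¹ j) + L (σ⁻¹ i)}
          ∪ {x : ℝ | ∃ j : Fin r, j < i ∧ σ⁻¹ j < σ⁻¹ i ∧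
              x = L (σ⁻¹ i) - L (σ⁻¹ j)}) :=
  dlam_image_phiWi_general r L σ ε i
end
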